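/- For a > 0 and ω ∈ ℝ, ∫_{-∞}^{∞} cosh φ · exp(-a cosh φ + iω sinh φ) dφ = (2a/√(a²+ω²)) · K_1(√(a²+ω²)). -/

import Mathlib

open MeasureTheory

/-- Modified Bessel function of the second kind of order `ν`, via its integral representation. -/
noncomputable def besselK (ν : ℝ) (b : ℝ) : ℝ :=
  ∫ φ in Set.Ioi (0 : ℝ), Real.exp (-b * Real.cosh φ) * Real.cosh (ν * φ)

namespace BK

open Real

lemma norm_cosh_le (w : ℂ) : ‖Complex.cosh w‖ ≤ Real.cosh w.re := by
  rw [Complex.cosh, Real.cosh_eq]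
  calc ‖(Complex.exp w + Complex.exp (-w)) / 2‖
      ≤ (‖Complex.exp w‖ + ‖Complex.exp (-w)‖) / 2 := by
        rw [norm_div]
        have h2 : ‖(2:ℂ)‖ = 2 := by norm_num
        rw [h2]; gcongr; exact norm_add_le _ _
    _ = (Real.exp w.re + Real.exp (-w.re)) / 2 := by
        rw [Complex.norm_exp, Complex.norm_exp,
          Complex.neg_re]

lemma norm_sinh_le (w : ℂ) : ‖Complex.sinh w‖ ≤ Real.cosh w.re := by
  rw [Complex.sinh, Real.cosh_eq]
  calc ‖(Complex.exp w - Complex.exp (-w)) / 2‖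
      ≤ (‖Complex.exp w‖ + ‖Complex.exp (-w)‖) / 2 := by
        rw [norm_div]
        have h2 : ‖(2:ℂ)‖ = 2 := by norm_num
        rw [h2]; gcongr; exact norm_sub_le _ _
    _ = (Real.exp w.re + Real.exp (-w.re)) / 2 := by
        rw [Complex.norm_exp, Complex.norm_exp,
          Complex.neg_re]

lemma cosh_re_eq (w : ℂ) : (Complex.cosh w).re = Real.cosh w.re * Real.cos w.im := by
  conv_lhs => rw [← Complex.re_add_im w, Complex.cosh_add, Complex.cosh_mul_I,
    Complex.sinh_mul_I]
  simp [Complex.cosh_ofReal_re, Complex.sinh_ofReal_re, Complex.add_re, Complex.mul_re,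
    Complex.cos_ofReal_re, Complex.sin_ofReal_re, Complex.cosh_ofReal_im,
    Complex.sinh_ofReal_im, Complex.cos_ofReal_im, Complex.sin_ofReal_im]

lemma norm_exp_cosh (r : ℝ) (w : ℂ) :
    ‖Complex.exp (-(r : ℂ) * Complex.cosh w)‖
      = Real.exp (-(r * Real.cos w.im) * Real.cosh w.re) := by
  rw [Complex.norm_exp]
  congr 1
  rw [Complex.mul_re]
  simp [cosh_re_eq]
  ring
lemma cosh_add_le (s t : ℝ) : Real.cosh (s + t) ≤ 2 * Real.cosh s * Real.cosh t := by
  rw [Real.cosh_add]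
  have h1 : |Real.sinh s| ≤ Real.cosh s := by
    rw [Real.abs_sinh]
    calc Real.sinh |s| ≤ Real.cosh |s| := (Real.sinh_lt_cosh |s|).le
    _ = Real.cosh s := Real.cosh_abs s
  have h2 : |Real.sinh t| ≤ Real.cosh t := by
    rw [Real.abs_sinh]
    calc Real.sinh |t| ≤ Real.cosh |t| := (Real.sinh_lt_cosh |t|).le
    _ = Real.cosh t := Real.cosh_abs t
  have h3 : Real.sinh s * Real.sinh t ≤ Real.cosh s * Real.cosh t := by
    calc Real.sinh s * Real.sinh t ≤ |Real.sinh s * Real.sinh t| := le_abs_self _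
    _ = |Real.sinh s| * |Real.sinh t| := abs_mul _ _
    _ ≤ Real.cosh s * Real.cosh t := by
        apply mul_le_mul h1 h2 (abs_nonneg _) (Real.cosh_pos s).le
  nlinarith

lemma le_cosh_shift {s t : ℝ} (h : |t| ≤ 1) :
    Real.cosh s ≤ 2 * Real.cosh 1 * Real.cosh (s + t) := by
  have := cosh_add_le (s + t) (-t)
  simp only [add_neg_cancel_right] at this
  have hle : Real.cosh (-t) ≤ Real.cosh 1 := by
    rw [Real.cosh_le_cosh]; simpa using h
  calc Real.cosh s ≤ 2 * Real.cosh (s+t) * Real.cosh (-t) := this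
    _ ≤ 2 * Real.cosh (s+t) * Real.cosh 1 := by
        apply mul_le_mul_of_nonneg_left hle (by positivity)
    _ = 2 * Real.cosh 1 * Real.cosh (s + t) := by ring

lemma cosh_shift_le {s t : ℝ} (h : |t| ≤ 1) :
    Real.cosh (s + t) ≤ 2 * Real.cosh 1 * Real.cosh s := by
  have hle : Real.cosh t ≤ Real.cosh 1 := by
    rw [Real.cosh_le_cosh]; simpa using h
  calc Real.cosh (s + t) ≤ 2 * Real.cosh s * Real.cosh t := cosh_add_le s t
    _ ≤ 2 * Real.cosh s * Real.cosh 1 := by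
        apply mul_le_mul_of_nonneg_left hle (by positivity)
    _ = 2 * Real.cosh 1 * Real.cosh s := by ring

lemma sq_div_eight_le_cosh (x : ℝ) : x ^ 2 / 8 ≤ Real.cosh x := by
  have h1 : Real.exp |x| ≥ (1 + |x| / 2) ^ 2 := by
    have := Real.add_one_le_exp (|x| / 2)
    calc Real.exp |x| = Real.exp (|x|/2) ^ 2 := by
          rw [← Real.exp_nat_mul]; ring_nf
      _ ≥ (1 + |x|/2) ^ 2 := by
          have h0 : 0 ≤ 1 + |x|/2 := by positivity
          gcongr
          linarith
  have h2 : Real.exp |x| ≤ 2 * Real.cosh x := by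
    rw [← Real.cosh_abs, Real.cosh_eq]
    have := Real.exp_pos (-|x|)
    linarith
  have h3 : (1 + |x|/2)^2 ≥ x^2/4 := by
    have : |x|^2 = x^2 := sq_abs x
    nlinarith [abs_nonneg x]
  linarith

lemma integrable_aux (n : ℕ) {δ : ℝ} (hδ : 0 < δ) :
    Integrable (fun φ : ℝ => Real.cosh φ ^ n * Real.exp (-δ * Real.cosh φ)) := by
  have key : ∀ φ : ℝ, Real.cosh φ ^ n * Real.exp (-δ * Real.cosh φ)
      ≤ Real.exp (4 * n^2 / δ) * Real.exp (-(δ/16) * φ^2) := by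
    intro φ
    have hc : Real.cosh φ ≤ Real.exp |φ| := by
      rw [← Real.cosh_abs, Real.cosh_eq]
      have h9 : Real.exp (-|φ|) ≤ Real.exp |φ| := by
        apply Real.exp_le_exp.mpr; have := abs_nonneg φ; linarith
      linarith
    have h1 : Real.cosh φ ^ n ≤ Real.exp (n * |φ|) := by
      calc Real.cosh φ ^ n ≤ Real.exp |φ| ^ n :=
            pow_le_pow_left₀ (Real.cosh_pos φ).le hc n
        _ = Real.exp (n * |φ|) := by rw [← Real.exp_nat_mul]
    have h2 : Real.exp (-δ * Real.cosh φ) ≤ Real.exp (-δ * (φ^2/8)) := by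
      apply Real.exp_le_exp.mpr
      have := sq_div_eight_le_cosh φ
      nlinarith
    calc Real.cosh φ ^ n * Real.exp (-δ * Real.cosh φ)
        ≤ Real.exp (n * |φ|) * Real.exp (-δ * (φ^2/8)) := by
          apply mul_le_mul h1 h2 (Real.exp_pos _).le (Real.exp_pos _).le
      _ = Real.exp (n * |φ| - δ * φ^2/8) := by rw [← Real.exp_add]; ring_nf
      _ ≤ Real.exp (4 * n^2/δ - δ/16 * φ^2) := by
          apply Real.exp_le_exp.mpr
          have habs : |φ|^2 = φ^2 := sq_abs φ
          have h6 : δ * ((n:ℝ)*|φ|) ≤ δ^2*φ^2/16 + 4*(n:ℝ)^2 := by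
            nlinarith [sq_nonneg (δ*|φ|/4 - 2*(n:ℝ))]
          have h7 : (n:ℝ)*|φ| ≤ 4*(n:ℝ)^2/δ + δ/16*φ^2 := by
            rw [← mul_le_mul_iff_right₀ hδ]
            calc δ * ((n:ℝ)*|φ|) ≤ δ^2*φ^2/16 + 4*(n:ℝ)^2 := h6
              _ = δ * (4*(n:ℝ)^2/δ + δ/16*φ^2) := by field_simp; ring
          nlinarith
      _ = Real.exp (4 * n^2/δ) * Real.exp (-(δ/16) * φ^2) := by
          rw [← Real.exp_add]; ring_nf
  have hint : Integrable (fun φ : ℝ => Real.exp (4 * n^2 / δ) * Real.exp (-(δ/16) * φ^2)) :=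
    (integrable_exp_neg_mul_sq (by positivity : (0:ℝ) < δ/16)).const_mul _
  apply hint.mono
  · apply Continuous.aestronglyMeasurable; continuity
  · refine Filter.Eventually.of_forall fun φ => ?_
    rw [Real.norm_eq_abs, Real.norm_eq_abs]
    rw [abs_of_nonneg (by positivity), abs_of_nonneg (by positivity)]
    exact key φ
noncomputable def g (r : ℝ) (A B : ℂ) (w : ℂ) : ℂ :=
  (A * Complex.cosh w + B * Complex.sinh w) * Complex.exp (-(r : ℂ) * Complex.cosh w)

noncomputable def g' (r : ℝ) (A B : ℂ) (w : ℂ) : ℂ :=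
  (A * Complex.sinh w + B * Complex.cosh w) * Complex.exp (-(r : ℂ) * Complex.cosh w)
    + (A * Complex.cosh w + B * Complex.sinh w) *
        (Complex.exp (-(r : ℂ) * Complex.cosh w) * (-(r : ℂ) * Complex.sinh w))

lemma hasDerivAt_g (r : ℝ) (A B : ℂ) (w : ℂ) : HasDerivAt (g r A B) (g' r A B w) w := by
  have h1 : HasDerivAt (fun w => A * Complex.cosh w + B * Complex.sinh w)
      (A * Complex.sinh w + B * Complex.cosh w) w :=
    ((Complex.hasDerivAt_cosh w).const_mul A).add ((Complex.hasDerivAt_sinh w).const_mul B)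
  have h2 : HasDerivAt (fun w => Complex.exp (-(r : ℂ) * Complex.cosh w))
      (Complex.exp (-(r : ℂ) * Complex.cosh w) * (-(r : ℂ) * Complex.sinh w)) w := by
    have h3 : HasDerivAt (fun w : ℂ => -(r : ℂ) * Complex.cosh w) (-(r:ℂ) * Complex.sinh w) w :=
      (Complex.hasDerivAt_cosh w).const_mul _
    exact h3.cexp
  exact h1.mul h2

lemma continuous_g (r : ℝ) (A B : ℂ) : Continuous (g r A B) := by
  unfold g; continuity

lemma continuous_g' (r : ℝ) (A B : ℂ) : Continuous (g' r A B) := by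
  unfold g'; continuity

lemma norm_g_le (r : ℝ) (A B : ℂ) (w : ℂ) :
    ‖g r A B w‖ ≤ (‖A‖ + ‖B‖) * Real.cosh w.re
      * Real.exp (-(r * Real.cos w.im) * Real.cosh w.re) := by
  unfold g
  rw [norm_mul, norm_exp_cosh]
  have h1 : ‖A * Complex.cosh w + B * Complex.sinh w‖ ≤ (‖A‖ + ‖B‖) * Real.cosh w.re := by
    calc ‖A * Complex.cosh w + B * Complex.sinh w‖
        ≤ ‖A * Complex.cosh w‖ + ‖B * Complex.sinh w‖ := norm_add_le _ _
      _ = ‖A‖ * ‖Complex.cosh w‖ + ‖B‖ * ‖Complex.sinh w‖ := by rw [norm_mul, norm_mul]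
      _ ≤ ‖A‖ * Real.cosh w.re + ‖B‖ * Real.cosh w.re := by
          gcongr
          · exact norm_cosh_le w
          · exact norm_sinh_le w
      _ = (‖A‖ + ‖B‖) * Real.cosh w.re := by ring
  exact mul_le_mul_of_nonneg_right h1 (Real.exp_pos _).le

lemma norm_g'_le (r : ℝ) (hr : 0 ≤ r) (A B : ℂ) (w : ℂ) :
    ‖g' r A B w‖ ≤ (‖A‖ + ‖B‖) * (Real.cosh w.re + r * Real.cosh w.re ^ 2)
      * Real.exp (-(r * Real.cos w.im) * Real.cosh w.re) := by
  unfold g'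
  have hch := norm_cosh_le w
  have hsh := norm_sinh_le w
  have hposc := Real.cosh_pos w.re
  have hAB : (0:ℝ) ≤ ‖A‖ + ‖B‖ := by positivity
  have h1 : ‖A * Complex.sinh w + B * Complex.cosh w‖ ≤ (‖A‖ + ‖B‖) * Real.cosh w.re := by
    calc ‖A * Complex.sinh w + B * Complex.cosh w‖
        ≤ ‖A‖ * ‖Complex.sinh w‖ + ‖B‖ * ‖Complex.cosh w‖ := by
          refine (norm_add_le _ _).trans ?_; rw [norm_mul, norm_mul]
      _ ≤ ‖A‖ * Real.cosh w.re + ‖B‖ * Real.cosh w.re := by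
          gcongr
      _ = (‖A‖ + ‖B‖) * Real.cosh w.re := by ring
  have h2 : ‖A * Complex.cosh w + B * Complex.sinh w‖ ≤ (‖A‖ + ‖B‖) * Real.cosh w.re := by
    calc ‖A * Complex.cosh w + B * Complex.sinh w‖
        ≤ ‖A‖ * ‖Complex.cosh w‖ + ‖B‖ * ‖Complex.sinh w‖ := by
          refine (norm_add_le _ _).trans ?_; rw [norm_mul, norm_mul]
      _ ≤ ‖A‖ * Real.cosh w.re + ‖B‖ * Real.cosh w.re := by
          gcongr
      _ = (‖A‖ + ‖B‖) * Real.cosh w.re := by ring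
  set E := Real.exp (-(r * Real.cos w.im) * Real.cosh w.re) with hE
  have hEnn : (0:ℝ) ≤ E := (Real.exp_pos _).le
  calc ‖(A * Complex.sinh w + B * Complex.cosh w) * Complex.exp (-(r : ℂ) * Complex.cosh w)
      + (A * Complex.cosh w + B * Complex.sinh w) *
          (Complex.exp (-(r : ℂ) * Complex.cosh w) * (-(r : ℂ) * Complex.sinh w))‖
      ≤ ‖A * Complex.sinh w + B * Complex.cosh w‖ * ‖Complex.exp (-(r : ℂ) * Complex.cosh w)‖
        + ‖A * Complex.cosh w + B * Complex.sinh w‖ *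
            (‖Complex.exp (-(r : ℂ) * Complex.cosh w)‖ * (‖(-(r:ℂ))‖ * ‖Complex.sinh w‖)) := by
        refine (norm_add_le _ _).trans ?_
        rw [norm_mul, norm_mul, norm_mul, norm_mul]
    _ ≤ ((‖A‖ + ‖B‖) * Real.cosh w.re) * E
        + ((‖A‖ + ‖B‖) * Real.cosh w.re) * (E * (r * Real.cosh w.re)) := by
        rw [norm_exp_cosh]
        have hnr : ‖(-(r:ℂ))‖ = r := by
          simp [abs_of_nonneg hr]
        rw [hnr]
        gcongr
    _ = (‖A‖ + ‖B‖) * (Real.cosh w.re + r * Real.cosh w.re ^ 2) * E := by ring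
lemma integrable_g_shift (r : ℝ) (hr : 0 < r) (A B : ℂ) {z : ℂ} (hz : |z.im| < π/2) :
    Integrable (fun φ : ℝ => g r A B (↑φ + z)) := by
  have him := abs_lt.mp hz
  have hcos : 0 < Real.cos z.im := Real.cos_pos_of_mem_Ioo ⟨him.1, him.2⟩
  · have hδ : 0 < r * Real.cos z.im := by positivity
    have hmaj : Integrable (fun φ : ℝ => (‖A‖ + ‖B‖) *
        (Real.cosh (φ + z.re) ^ 1 * Real.exp (-(r * Real.cos z.im) * Real.cosh (φ + z.re)))) :=
      ((integrable_aux 1 hδ).comp_add_right z.re).const_mul _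
    apply hmaj.mono
    · exact ((continuous_g r A B).comp (by continuity)).aestronglyMeasurable
    · filter_upwards with φ
      have hb := norm_g_le r A B (↑φ + z)
      have hre : (↑φ + z).re = φ + z.re := by simp
      have him' : (↑φ + z).im = z.im := by simp
      rw [hre, him'] at hb
      have hrhs : ‖(‖A‖ + ‖B‖) *
          (Real.cosh (φ + z.re) ^ 1 * Real.exp (-(r * Real.cos z.im) * Real.cosh (φ + z.re)))‖
          = (‖A‖ + ‖B‖) * (Real.cosh (φ + z.re) ^ 1 *
              Real.exp (-(r * Real.cos z.im) * Real.cosh (φ + z.re))) := by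
        rw [Real.norm_eq_abs, abs_of_nonneg (by positivity)]
      rw [hrhs, pow_one]
      calc ‖g r A B (↑φ + z)‖ ≤ (‖A‖ + ‖B‖) * Real.cosh (φ + z.re)
            * Real.exp (-(r * Real.cos z.im) * Real.cosh (φ + z.re)) := hb
        _ = (‖A‖ + ‖B‖) * (Real.cosh (φ + z.re)
            * Real.exp (-(r * Real.cos z.im) * Real.cosh (φ + z.re))) := by ring

set_option maxHeartbeats 1000000 in
lemma hasDerivAt_H (r : ℝ) (hr : 0 < r) (A B : ℂ) {z₀ : ℂ} (hz : |z₀.im| < π/2) :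
    HasDerivAt (fun z => ∫ φ : ℝ, g r A B (↑φ + z)) (∫ φ : ℝ, g' r A B (↑φ + z₀)) z₀ := by
  set K := 2 * Real.cosh 1 with hKdef
  have hK : 1 ≤ K := by
    have := Real.one_le_cosh 1; simp only [hKdef]; linarith
  set ε := min 1 ((π/2 - |z₀.im|)/2) with hεdef
  have hε : 0 < ε := by
    apply lt_min one_pos; linarith
  have hε1 : ε ≤ 1 := min_le_left _ _
  set β := |z₀.im| + ε with hβdef
  have hβ : β < π/2 := by
    have h2 : ε ≤ (π/2 - |z₀.im|)/2 := min_le_right _ _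
    simp only [hβdef]; linarith
  have hβ0 : 0 ≤ β := by positivity
  have hcosβ : 0 < Real.cos β := Real.cos_pos_of_mem_Ioo ⟨by linarith [Real.pi_pos], hβ⟩
  set δ := r * Real.cos β / K with hδdef
  have hδ : 0 < δ := by positivity
  set C := ‖A‖ + ‖B‖ with hCdef
  have hC : 0 ≤ C := by positivity
  set bound := fun φ : ℝ => C * K * (Real.cosh (φ + z₀.re) ^ 1
        * Real.exp (-δ * Real.cosh (φ + z₀.re)))
      + C * (r * K^2) * (Real.cosh (φ + z₀.re) ^ 2
        * Real.exp (-δ * Real.cosh (φ + z₀.re))) with hbdef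
  -- facts about points in the ball
  have hball : ∀ x ∈ Metric.ball z₀ ε, ∀ φ : ℝ, ‖g' r A B (↑φ + x)‖ ≤ bound φ := by
    intro x hx φ
    have hdist : ‖x - z₀‖ < ε := by
      rwa [Metric.mem_ball, dist_eq_norm] at hx
    have him : |x.im| ≤ β := by
      have h1 : |x.im - z₀.im| ≤ ‖x - z₀‖ := by
        have := Complex.abs_im_le_norm (x - z₀)
        simpa [Complex.sub_im] using this
      have := abs_sub_abs_le_abs_sub x.im z₀.im
      simp only [hβdef]
      linarith
    have hre : |x.re - z₀.re| ≤ 1 := by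
      have h1 : |x.re - z₀.re| ≤ ‖x - z₀‖ := by
        have := Complex.abs_re_le_norm (x - z₀)
        simpa [Complex.sub_re] using this
      linarith
    have hcosx : Real.cos β ≤ Real.cos x.im := by
      rw [← Real.cos_abs x.im]
      apply Real.cos_le_cos_of_nonneg_of_le_pi (abs_nonneg _) (by linarith [Real.pi_pos, hβ]) him
    have hw_re : (↑φ + x).re = φ + x.re := by simp
    have hw_im : (↑φ + x).im = x.im := by simp
    set c₀ := Real.cosh (φ + z₀.re) with hc₀
    have hc₀pos : 0 < c₀ := Real.cosh_pos _
    have hxpos : 0 < Real.cosh (φ + x.re) := Real.cosh_pos _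
    have hch_up : Real.cosh (φ + x.re) ≤ K * c₀ := by
      have h2 : φ + x.re = (φ + z₀.re) + (x.re - z₀.re) := by ring
      rw [h2]
      simpa [hKdef] using cosh_shift_le (s := φ + z₀.re) hre
    have hch_lo : c₀ ≤ K * Real.cosh (φ + x.re) := by
      have h2 : (φ + x.re) + (z₀.re - x.re) = φ + z₀.re := by ring
      have h3 := le_cosh_shift (s := φ + z₀.re) (t := x.re - z₀.re) hre
      have harg : φ + z₀.re + (x.re - z₀.re) = φ + x.re := by ring
      rw [harg] at h3
      simpa [hKdef] using h3
    have h4 : c₀ / K ≤ Real.cosh (φ + x.re) := by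
      rw [div_le_iff₀ (by linarith : (0:ℝ) < K)]
      calc c₀ ≤ K * Real.cosh (φ + x.re) := hch_lo
        _ = Real.cosh (φ + x.re) * K := by ring
    have hexp : Real.exp (-(r * Real.cos x.im) * Real.cosh (φ + x.re))
        ≤ Real.exp (-δ * c₀) := by
      apply Real.exp_le_exp.mpr
      have hkey : δ * c₀ ≤ (r * Real.cos x.im) * Real.cosh (φ + x.re) := by
        calc δ * c₀ = (r * Real.cos β) * (c₀ / K) := by
              rw [hδdef]; field_simp
          _ ≤ (r * Real.cos x.im) * Real.cosh (φ + x.re) := by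
              apply mul_le_mul ?_ h4 (by positivity)
                (mul_nonneg hr.le (le_trans hcosβ.le hcosx))
              exact mul_le_mul_of_nonneg_left hcosx hr.le
      nlinarith
    calc ‖g' r A B (↑φ + x)‖
        ≤ C * (Real.cosh (φ + x.re) + r * Real.cosh (φ + x.re) ^ 2)
            * Real.exp (-(r * Real.cos x.im) * Real.cosh (φ + x.re)) := by
          have h5 := norm_g'_le r hr.le A B (↑φ + x)
          rwa [hw_re, hw_im] at h5
      _ ≤ C * (K * c₀ + r * (K * c₀) ^ 2) * Real.exp (-δ * c₀) := by
          apply mul_le_mul ?_ hexp (Real.exp_pos _).le (by positivity)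
          apply mul_le_mul_of_nonneg_left ?_ hC
          have h6 : Real.cosh (φ + x.re) ^ 2 ≤ (K * c₀) ^ 2 := by
            apply pow_le_pow_left₀ hxpos.le hch_up
          have h7 : r * Real.cosh (φ + x.re) ^ 2 ≤ r * (K * c₀) ^ 2 :=
            mul_le_mul_of_nonneg_left h6 hr.le
          linarith
      _ = bound φ := by rw [hbdef]; ring
  -- apply the dominated convergence lemma for derivatives
  have hmeas : ∀ᶠ x in nhds z₀,
      AEStronglyMeasurable (fun φ : ℝ => g r A B (↑φ + x)) volume := by
    refine Filter.Eventually.of_forall fun x => ?_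
    exact ((continuous_g r A B).comp
      (Complex.continuous_ofReal.add continuous_const)).aestronglyMeasurable
  have hint : Integrable (fun φ : ℝ => g r A B (↑φ + z₀)) := integrable_g_shift r hr A B hz
  have hmeas' : AEStronglyMeasurable (fun φ : ℝ => g' r A B (↑φ + z₀)) volume :=
    ((continuous_g' r A B).comp
      (Complex.continuous_ofReal.add continuous_const)).aestronglyMeasurable
  have hbnd : ∀ᵐ φ : ℝ ∂volume, ∀ x ∈ Metric.ball z₀ ε,
      ‖g' r A B (↑φ + x)‖ ≤ bound φ :=
    Filter.Eventually.of_forall fun φ x hx => hball x hx φ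
  have hbint : Integrable bound := by
    rw [hbdef]
    exact (((integrable_aux 1 hδ).comp_add_right z₀.re).const_mul (C * K)).add
      (((integrable_aux 2 hδ).comp_add_right z₀.re).const_mul (C * (r * K ^ 2)))
  have hdiff : ∀ᵐ φ : ℝ ∂volume, ∀ x ∈ Metric.ball z₀ ε,
      HasDerivAt (fun z => g r A B (↑φ + z)) (g' r A B (↑φ + x)) x := by
    refine Filter.Eventually.of_forall fun φ x hx => ?_
    have h1 : HasDerivAt (fun z : ℂ => ↑φ + z) 1 x := by
      simpa using (hasDerivAt_id x).const_add (↑φ : ℂ)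
    have h2 := (hasDerivAt_g r A B (↑φ + x)).comp x h1
    simpa [Function.comp_def] using h2
  exact (hasDerivAt_integral_of_dominated_loc_of_deriv_le (Metric.ball_mem_nhds z₀ hε) hmeas hint hmeas' hbnd
    hbint hdiff).2
lemma hasDerivAt_H_zero (r : ℝ) (hr : 0 < r) (A B : ℂ) {z : ℂ} (hz : |z.im| < π/2) :
    HasDerivAt (fun z => ∫ φ : ℝ, g r A B (↑φ + z)) 0 z := by
  have hH := hasDerivAt_H r hr A B hz
  set D := ∫ φ : ℝ, g' r A B (↑φ + z) with hD
  have htrans : ∀ t : ℝ, (∫ φ : ℝ, g r A B (↑φ + (z + ↑t))) = ∫ φ : ℝ, g r A B (↑φ + z) := by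
    intro t
    have h0 := integral_add_right_eq_self (μ := volume) (fun φ : ℝ => g r A B (↑φ + z)) t
    rw [← h0]
    congr 1; funext φ; congr 1; push_cast; ring
  have h1 : HasDerivAt (fun w : ℂ => ∫ φ : ℝ, g r A B (↑φ + (z + w))) D 0 := by
    have hin : HasDerivAt (fun w : ℂ => z + w) 1 0 := by
      simpa using (hasDerivAt_id (0:ℂ)).const_add z
    have hH' : HasDerivAt (fun z => ∫ φ : ℝ, g r A B (↑φ + z)) D (z + 0) := by
      simpa using hH
    have := hH'.comp (0:ℂ) hin
    simpa [Function.comp_def] using this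
  have h2 : HasDerivAt (fun t : ℝ => ∫ φ : ℝ, g r A B (↑φ + (z + ↑t))) D 0 := by
    have := HasDerivAt.comp_ofReal (e := fun w : ℂ => ∫ φ : ℝ, g r A B (↑φ + (z + w)))
      (e' := D) (z := 0) (by simpa using h1)
    simpa using this
  have h3 : (fun t : ℝ => ∫ φ : ℝ, g r A B (↑φ + (z + ↑t)))
      = fun _ : ℝ => ∫ φ : ℝ, g r A B (↑φ + z) := funext htrans
  rw [h3] at h2
  have h4 : D = 0 := h2.unique (hasDerivAt_const _ _)
  rw [← h4]; exact hH

lemma integral_g_vert (r : ℝ) (hr : 0 < r) (A B : ℂ) {α : ℝ} (hα : |α| < π/2) :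
    (∫ φ : ℝ, g r A B (↑φ + -(↑α * Complex.I))) = ∫ φ : ℝ, g r A B (↑φ + 0) := by
  set ψ : ℝ → ℂ := fun s => ∫ φ : ℝ, g r A B (↑φ + -(↑α * Complex.I * ↑s)) with hψdef
  have hder : ∀ s ∈ Set.Icc (0:ℝ) 1, HasDerivAt ψ 0 s := by
    intro s hs
    have hzin : |(-(↑α * Complex.I * (↑s:ℂ))).im| < π/2 := by
      have h8 : (-(↑α * Complex.I * (↑s:ℂ))).im = -(α * s) := by simp
      rw [h8, abs_neg, abs_mul]
      calc |α| * |s| ≤ |α| * 1 := by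
            apply mul_le_mul_of_nonneg_left _ (abs_nonneg α)
            rw [abs_le]; exact ⟨by linarith [hs.1], hs.2⟩
        _ < π/2 := by rwa [mul_one]
    have hH0 := hasDerivAt_H_zero r hr A B hzin
    have hin : HasDerivAt (fun w : ℂ => -(↑α * Complex.I * w)) (-(↑α * Complex.I)) ↑s := by
      have h9 : (fun w : ℂ => -(↑α * Complex.I * w)) = fun w : ℂ => -(↑α * Complex.I) * w := by
        funext w; ring
      rw [h9]
      simpa using (hasDerivAt_id (↑s : ℂ)).const_mul (-(↑α * Complex.I) : ℂ)
    have hcomp := hH0.comp (↑s : ℂ) hin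
    have := HasDerivAt.comp_ofReal
      (e := fun w : ℂ => ∫ φ : ℝ, g r A B (↑φ + -(↑α * Complex.I * w)))
      (e' := 0 * (-(↑α * Complex.I))) (z := s) (by simpa [Function.comp_def] using hcomp)
    simpa using this
  have hcont : ContinuousOn ψ (Set.Icc 0 1) :=
    fun s hs => ((hder s hs).continuousAt).continuousWithinAt
  have hkey := constant_of_has_deriv_right_zero hcont
    (fun s hs => ((hder s (Set.Ico_subset_Icc_self hs)).hasDerivWithinAt))
  have h10 : ψ 1 = ψ 0 := hkey 1 ⟨zero_le_one, le_refl 1⟩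
  have hψ1 : ψ 1 = ∫ φ : ℝ, g r A B (↑φ + -(↑α * Complex.I)) := by
    rw [hψdef]; simp
  have hψ0 : ψ 0 = ∫ φ : ℝ, g r A B (↑φ + 0) := by
    rw [hψdef]; simp
  rw [← hψ1, ← hψ0, h10]

lemma integral_g_zero (r : ℝ) (hr : 0 < r) (A B : ℂ) :
    (∫ φ : ℝ, g r A B (↑φ + 0)) = A * (2 * besselK 1 r) := by
  have I1 : Integrable (fun φ : ℝ => Real.cosh φ * Real.exp (-r * Real.cosh φ)) := by
    simpa using integrable_aux 1 hr
  have I2 : Integrable (fun φ : ℝ => Real.sinh φ * Real.exp (-r * Real.cosh φ)) := by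
    apply I1.mono
    · apply Continuous.aestronglyMeasurable; continuity
    · filter_upwards with φ
      rw [Real.norm_eq_abs, Real.norm_eq_abs, abs_mul, abs_mul,
        abs_of_nonneg (Real.exp_pos _).le, abs_of_nonneg (Real.cosh_pos _).le]
      apply mul_le_mul_of_nonneg_right _ (Real.exp_pos _).le
      rw [Real.abs_sinh]
      calc Real.sinh |φ| ≤ Real.cosh |φ| := (Real.sinh_lt_cosh _).le
        _ = Real.cosh φ := Real.cosh_abs φ
  have hpt : ∀ φ : ℝ, g r A B (↑φ + 0)
      = A * ↑(Real.cosh φ * Real.exp (-r * Real.cosh φ))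
        + B * ↑(Real.sinh φ * Real.exp (-r * Real.cosh φ)) := by
    intro φ
    rw [add_zero]
    unfold g
    rw [← Complex.ofReal_cosh, ← Complex.ofReal_sinh]
    have : (-(r:ℂ) * ↑(Real.cosh φ)) = ↑(-r * Real.cosh φ) := by push_cast; ring
    rw [this, ← Complex.ofReal_exp]
    push_cast
    ring
  rw [integral_congr_ae (Filter.Eventually.of_forall hpt)]
  have hA : Integrable (fun φ : ℝ => A * (↑(Real.cosh φ * Real.exp (-r * Real.cosh φ)) : ℂ)) := by
    apply Integrable.const_mul
    exact I1.ofReal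
  have hB : Integrable (fun φ : ℝ => B * (↑(Real.sinh φ * Real.exp (-r * Real.cosh φ)) : ℂ)) := by
    apply Integrable.const_mul
    exact I2.ofReal
  rw [integral_add hA hB, integral_const_mul, integral_const_mul]
  have ho1 : (∫ φ : ℝ, (↑(Real.cosh φ * Real.exp (-r * Real.cosh φ)) : ℂ))
      = ↑(∫ φ : ℝ, Real.cosh φ * Real.exp (-r * Real.cosh φ)) := integral_ofReal
  have ho2 : (∫ φ : ℝ, (↑(Real.sinh φ * Real.exp (-r * Real.cosh φ)) : ℂ))
      = ↑(∫ φ : ℝ, Real.sinh φ * Real.exp (-r * Real.cosh φ)) := integral_ofReal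
  rw [ho1, ho2]
  have hcosh : (∫ φ : ℝ, Real.cosh φ * Real.exp (-r * Real.cosh φ)) = 2 * besselK 1 r := by
    have habs := integral_comp_abs (f := fun x => Real.cosh x * Real.exp (-r * Real.cosh x))
    have heq : (fun x : ℝ => Real.cosh |x| * Real.exp (-r * Real.cosh |x|))
        = fun x : ℝ => Real.cosh x * Real.exp (-r * Real.cosh x) := by
      funext x; rw [Real.cosh_abs]
    rw [heq] at habs
    rw [habs, besselK]
    congr 1
    apply setIntegral_congr_fun measurableSet_Ioi
    intro x _
    simp [mul_comm]
  have hsinh : (∫ φ : ℝ, Real.sinh φ * Real.exp (-r * Real.cosh φ)) = 0 := by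
    set f : ℝ → ℝ := fun φ => Real.sinh φ * Real.exp (-r * Real.cosh φ) with hfdef
    have hIic : IntegrableOn f (Set.Iic 0) := I2.integrableOn
    have hIoi : IntegrableOn f (Set.Ioi 0) := I2.integrableOn
    have hsplit : (∫ φ : ℝ, f φ) = (∫ φ in Set.Iic 0, f φ) + ∫ φ in Set.Ioi 0, f φ := by
      rw [← setIntegral_union (Set.Iic_disjoint_Ioi le_rfl) measurableSet_Ioi hIic hIoi,
        Set.Iic_union_Ioi, Measure.restrict_univ]
    have hodd : ∀ x : ℝ, f (-x) = -f x := by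
      intro x; rw [hfdef]; simp [Real.sinh_neg, Real.cosh_neg]
    have hneg : (∫ φ in Set.Iic (0:ℝ), f φ) = -∫ φ in Set.Ioi (0:ℝ), f φ := by
      have h5 := integral_comp_neg_Iic (0:ℝ) f
      rw [neg_zero] at h5
      have h6 : (∫ x in Set.Iic (0:ℝ), f (-x)) = ∫ x in Set.Iic (0:ℝ), -f x := by
        apply setIntegral_congr_fun measurableSet_Iic
        intro x _; exact hodd x
      rw [h6, integral_neg] at h5
      linarith
    rw [hsplit, hneg]; ring
  rw [hcosh, hsinh]
  simp

end BK


theorem integral_cosh_oscillatory (a ω : ℝ) (ha : 0 < a) :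
    ∫ φ : ℝ, (Real.cosh φ : ℂ) *
        Complex.exp (-(a : ℂ) * Real.cosh φ + Complex.I * ω * Real.sinh φ)
      = ((2 * a / Real.sqrt (a ^ 2 + ω ^ 2)) * besselK 1 (Real.sqrt (a ^ 2 + ω ^ 2)) : ℝ) := by
  set r := Real.sqrt (a ^ 2 + ω ^ 2) with hrdef
  have hr : 0 < r := Real.sqrt_pos.mpr (by positivity)
  set α := Real.arctan (ω / a) with hαdef
  have hα : |α| < Real.pi / 2 := by
    rw [abs_lt]
    exact ⟨Real.neg_pi_div_two_lt_arctan _, Real.arctan_lt_pi_div_two _⟩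
  have hsq : Real.sqrt (1 + (ω / a) ^ 2) = r / a := by
    have h1 : 1 + (ω / a) ^ 2 = (a ^ 2 + ω ^ 2) / a ^ 2 := by field_simp
    rw [h1, Real.sqrt_div (by positivity) (a ^ 2), ← hrdef, Real.sqrt_sq ha.le]
  have hcosα : Real.cos α = a / r := by
    rw [hαdef, Real.cos_arctan, hsq]
    rw [one_div_div]
  have hsinα : Real.sin α = ω / r := by
    rw [hαdef, Real.sin_arctan, hsq]
    field_simp

  have hra : r * Real.cos α = a := by
    rw [hcosα]; field_simp
  have hrω : r * Real.sin α = ω := by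
    rw [hsinα]; field_simp
  set A : ℂ := (Real.cos α : ℂ) with hAdef
  set B : ℂ := (Real.sin α : ℂ) * Complex.I with hBdef
  have hpt : ∀ φ : ℝ, (Real.cosh φ : ℂ) *
      Complex.exp (-(a : ℂ) * Real.cosh φ + Complex.I * ω * Real.sinh φ)
      = BK.g r A B (↑φ + -(↑α * Complex.I)) := by
    intro φ
    unfold BK.g
    have hw : (↑φ + -(↑α * Complex.I) : ℂ) = ↑φ - ↑α * Complex.I := by ring
    rw [hw, Complex.cosh_sub, Complex.sinh_sub, Complex.cosh_mul_I, Complex.sinh_mul_I,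
      ← Complex.ofReal_cosh, ← Complex.ofReal_sinh, ← Complex.ofReal_cos, ← Complex.ofReal_sin]
    have hCS : (Real.cos α : ℂ) ^ 2 + (Real.sin α : ℂ) ^ 2 = 1 := by
      norm_cast
      rw [add_comm]
      exact Real.sin_sq_add_cos_sq α
    have hra' : (r : ℂ) * (Real.cos α : ℂ) = (a : ℂ) := by
      norm_cast
    have hrω' : (r : ℂ) * (Real.sin α : ℂ) = (ω : ℂ) := by
      norm_cast
    have hcoef : A * ((Real.cosh φ : ℂ) * (Real.cos α : ℂ)
          - (Real.sinh φ : ℂ) * ((Real.sin α : ℂ) * Complex.I))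
        + B * ((Real.sinh φ : ℂ) * (Real.cos α : ℂ)
          - (Real.cosh φ : ℂ) * ((Real.sin α : ℂ) * Complex.I)) = (Real.cosh φ : ℂ) := by
      rw [hAdef, hBdef]
      have hI : Complex.I ^ 2 = -1 := Complex.I_sq
      linear_combination (Real.cosh φ : ℂ) * hCS - (Real.cosh φ : ℂ) * (Real.sin α : ℂ) ^ 2 * hI
        - (Real.cosh φ : ℂ) * (Real.sin α : ℂ) ^ 2 * hI + (Real.cosh φ : ℂ) * (Real.sin α : ℂ) ^ 2 * hI
    have hexp : -(↑r : ℂ) * ((Real.cosh φ : ℂ) * (Real.cos α : ℂ)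
          - (Real.sinh φ : ℂ) * ((Real.sin α : ℂ) * Complex.I))
        = -(a : ℂ) * (Real.cosh φ : ℂ) + Complex.I * ↑ω * (Real.sinh φ : ℂ) := by
      linear_combination (-(Real.cosh φ : ℂ)) * hra' + (Real.sinh φ : ℂ) * Complex.I * hrω'
    rw [hcoef, hexp]
  rw [integral_congr_ae (Filter.Eventually.of_forall hpt)]
  rw [BK.integral_g_vert r hr A B hα, BK.integral_g_zero r hr A B]
  rw [hAdef, hcosα]
  push_cast
  field_simp
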